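/- arXiv:1709.00580 — 8 statements merged into one kernel-verified Lean document; each statement's English description precedes it below -/
import Mathlib

section
/- For all natural numbers l, m with 0 ≤ m-1 ≤ l, the sum ∑_{k=m-1}^{l} (-1)^{k+m} · ((k+2)/(k+1)) · C(l,k) · C(k+1,m) equals 0 if l > m, equals 1 if l = m, and equals -1 - 1/(l+1) if l = m-1. -/
/-!
Write `m = n + 1`. Pascal's rule together with the absorption identity
`(k + 1) C(k, n) = (n + 1) C(k + 1, n + 1)` gives
`(k + 2) / (k + 1) · C(k + 1, n + 1) = C(k, n + 1) + (n + 2) / (n + 1) · C(k, n)`,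
which splits the sum into two inverse binomial transforms `∑ₖ (-1)ᵏ C(l, k) C(k, j)`.
Since `C(l, k) C(k, j) = C(l, j) C(l - j, k - j)`, each of these is an alternating binomial
sum and equals `(-1)ʲ` if `l = j` and `0` otherwise.
-/

open Finset

section AlternatingBinomial

variable {R : Type*} [CommRing R]

theorem sum_range_neg_one_pow_mul_choose (d : ℕ) :
    ∑ i ∈ range (d + 1), (-1 : R) ^ i * d.choose i = if d = 0 then 1 else 0 := by
  have h := congrArg (Int.cast : ℤ → R) (Int.alternating_sum_range_choose (n := d))
  push_cast at h
  exact h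

theorem sum_range_neg_one_pow_mul_choose_mul_choose (l j : ℕ) :
    ∑ k ∈ range (l + 1), (-1 : R) ^ k * l.choose k * k.choose j =
      if l = j then (-1) ^ j else 0 := by
  rcases lt_or_ge l j with hlj | hjl
  · rw [if_neg hlj.ne]
    refine sum_eq_zero fun k hk => ?_
    rw [Nat.choose_eq_zero_of_lt ((mem_range.1 hk).trans_le hlj), Nat.cast_zero, mul_zero]
  obtain ⟨d, rfl⟩ := Nat.exists_eq_add_of_le hjl
  have hshift : ∀ i ∈ range (d + 1), (-1 : R) ^ (j + i) * (j + d).choose (j + i) *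
      (j + i).choose j = (-1) ^ j * (j + d).choose j * ((-1) ^ i * d.choose i) := by
    intro i hi
    have hchoose := Nat.choose_mul (n := j + d) (k := j + i) (s := j) (by simp at hi; omega)
    rw [Nat.add_sub_cancel_left, Nat.add_sub_cancel_left] at hchoose
    rw [pow_add, mul_assoc _ (((j + d).choose (j + i) : ℕ) : R), ← Nat.cast_mul, hchoose]
    push_cast
    ring
  rw [add_assoc, sum_range_add, sum_congr rfl hshift, ← mul_sum,
    sum_range_neg_one_pow_mul_choose,
    sum_eq_zero fun k hk => by rw [Nat.choose_eq_zero_of_lt (mem_range.1 hk)]; simp]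
  rcases eq_or_ne d 0 with rfl | hd
  · simp
  · simp [hd]

end AlternatingBinomial

section CharZeroField

variable {K : Type*} [Field K] [CharZero K]

theorem div_mul_choose_succ_succ (k n : ℕ) :
    ((k : K) + 2) / ((k : K) + 1) * (k + 1).choose (n + 1) =
      k.choose (n + 1) + ((n : K) + 2) / ((n : K) + 1) * k.choose n := by
  have hk : (k : K) + 1 ≠ 0 := Nat.cast_add_one_ne_zero k
  have hn : (n : K) + 1 ≠ 0 := Nat.cast_add_one_ne_zero n
  have hpascal : (((k + 1).choose (n + 1) : ℕ) : K) = k.choose n + k.choose (n + 1) := by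
    exact_mod_cast Nat.choose_succ_succ' k n
  have habsorb : ((k : K) + 1) * k.choose n = (k + 1).choose (n + 1) * ((n : K) + 1) := by
    exact_mod_cast Nat.add_one_mul_choose_eq k n
  field_simp
  linear_combination (-1 : K) * habsorb + (((k : K) + 1) * ((n : K) + 1)) * hpascal

theorem sum_range_neg_one_pow_mul_div_mul_choose_mul_choose_succ (l n : ℕ) :
    ∑ k ∈ range (l + 1), (-1 : K) ^ (k + (n + 1)) * (((k : K) + 2) / ((k : K) + 1)) *
        l.choose k * (k + 1).choose (n + 1) =
      (if l = n + 1 then 1 else 0) - if l = n then ((n : K) + 2) / ((n : K) + 1) else 0 := by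
  have hsplit : ∀ k : ℕ, (-1 : K) ^ (k + (n + 1)) * (((k : K) + 2) / ((k : K) + 1)) *
      l.choose k * (k + 1).choose (n + 1) =
      (-1) ^ (n + 1) * ((-1) ^ k * l.choose k * k.choose (n + 1)) +
        (-1) ^ (n + 1) * (((n : K) + 2) / ((n : K) + 1)) *
          ((-1) ^ k * l.choose k * k.choose n) := by
    intro k
    rw [pow_add]
    linear_combination
      ((-1 : K) ^ k * (-1) ^ (n + 1) * l.choose k) * div_mul_choose_succ_succ (K := K) k n
  have hsq : (-1 : K) ^ (n + 1) * (-1) ^ (n + 1) = 1 := by rw [← mul_pow]; simp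
  have hodd : (-1 : K) ^ (n + 1) * (-1) ^ n = -1 := by
    rw [pow_succ, mul_right_comm, ← mul_pow]; simp
  rw [sum_congr rfl fun k _ => hsplit k, sum_add_distrib, ← mul_sum, ← mul_sum,
    sum_range_neg_one_pow_mul_choose_mul_choose, sum_range_neg_one_pow_mul_choose_mul_choose]
  split_ifs with h1 h2 h2
  · omega
  · linear_combination hsq
  · linear_combination (((n : K) + 2) / ((n : K) + 1)) * hodd
  · ring

end CharZeroField

theorem stmt_0 (l m : ℕ) (hm : 1 ≤ m) (hl : m - 1 ≤ l) :
    ∑ k ∈ Finset.Icc (m - 1) l,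
      (-1 : ℚ) ^ (k + m) * (((k : ℚ) + 2) / ((k : ℚ) + 1)) * (l.choose k : ℚ) *
        ((k + 1).choose m : ℚ) =
    if m < l then 0 else if l = m then 1 else -1 - 1 / ((l : ℚ) + 1) := by
  obtain ⟨n, rfl⟩ := Nat.exists_eq_add_of_le' hm
  rw [Nat.add_sub_cancel] at hl ⊢
  have hIcc : Icc n l ⊆ range (l + 1) := fun k hk => by
    simp only [mem_Icc, mem_range] at hk ⊢; omega
  have hvanish : ∀ k ∈ range (l + 1), k ∉ Icc n l → (-1 : ℚ) ^ (k + (n + 1)) *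
      (((k : ℚ) + 2) / ((k : ℚ) + 1)) * l.choose k * (k + 1).choose (n + 1) = 0 := by
    intro k hkl hkn
    rw [Nat.choose_eq_zero_of_lt (n := k + 1) (k := n + 1)
      (by simp only [mem_Icc, mem_range] at hkl hkn; omega), Nat.cast_zero, mul_zero]
  rw [sum_subset hIcc hvanish, sum_range_neg_one_pow_mul_div_mul_choose_mul_choose_succ]
  rcases hl.eq_or_lt with rfl | hlt
  · rw [if_neg (by omega), if_pos rfl, if_neg (by omega), if_neg (by omega)]
    field_simp
    ring
  rcases (Nat.succ_le_of_lt hlt).eq_or_lt with rfl | hlt'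
  · simp
  · simp [hlt', hlt'.ne', hlt.ne']
end

section
/- For all natural numbers l, m with l ≥ m ≥ 0: ∑_{k=m+1}^{l+1} (-1)^{k+m} · C(l+1,k) · [ (1-(2k+1)(m+2)) · ((2m+2)/(2k+1)) · C(k,m+1) + (1-(2k+1)(m+1)) · ((2m+1)/(2k+1)) · C(k,m) ] + (1-(2m+1)(m+1)) · C(l+1,m) equals 0 if l > m, and equals 2(l+1)(l+2) if l = m. -/
/-!
Since `(m + 1) C(k, m + 1) + m C(k, m) = k C(k, m)`, the factor `1 / (2k + 1)` cancels and each
bracket becomes `(1 - (m + 1)(2m + 1)) C(k, m) - 2 (m + 1)(m + 2) C(k, m + 1)`. The sum then reduces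
to the inversion identity `∑_{j ≤ k ≤ n} (-1)^(k + j) C(n, k) C(k, j) = [j = n]`, which follows
from `C(n, k) C(k, j) = C(n, j) C(n - j, k - j)` and the vanishing of alternating row sums.
-/

open Finset

theorem Nat.succ_mul_choose_succ_add_mul_choose (k m : ℕ) :
    (m + 1) * k.choose (m + 1) + m * k.choose m = k * k.choose m := by
  rcases lt_or_ge k m with hkm | hmk
  · simp [Nat.choose_eq_zero_of_lt hkm, Nat.choose_eq_zero_of_lt (hkm.trans m.lt_succ_self)]
  · rw [mul_comm, Nat.choose_succ_right_eq, mul_comm m, ← mul_add, Nat.sub_add_cancel hmk, mul_comm]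

theorem sum_Icc_neg_one_pow_mul_choose_mul_choose {R : Type*} [CommRing R] (n j : ℕ) :
    ∑ k ∈ Icc j n, (-1 : R) ^ (k + j) * (n.choose k : R) * (k.choose j : R) =
      if j = n then 1 else 0 := by
  rcases lt_or_ge n j with hnj | hjn
  · simp [Icc_eq_empty_of_lt hnj, hnj.ne']
  have hterm : ∀ i ∈ range (n - j + 1),
      (-1 : R) ^ (j + i + j) * (n.choose (j + i) : R) * ((j + i).choose j : R) =
        n.choose j * ((-1) ^ i * ((n - j).choose i : R)) := by
    intro i _
    have hmul := Nat.choose_mul (n := n) (Nat.le_add_right j i)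
    rw [Nat.add_sub_cancel_left] at hmul
    rw [mul_assoc, ← Nat.cast_mul, hmul, Nat.cast_mul, add_right_comm, pow_add, ← two_mul, pow_mul]
    simp only [neg_one_sq, one_pow, one_mul]
    ring
  have halt : ∑ i ∈ range (n - j + 1), (-1 : R) ^ i * ((n - j).choose i : R) =
      if n - j = 0 then 1 else 0 := by
    exact_mod_cast congrArg (Int.cast : ℤ → R) Int.alternating_sum_range_choose
  rw [← Ico_add_one_right_eq_Icc, sum_Ico_eq_sum_range, show n + 1 - j = n - j + 1 by omega,
    sum_congr rfl hterm, ← mul_sum, halt]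
  by_cases hj : j = n
  · simp [hj]
  · simp [hj, show n - j ≠ 0 by omega]

theorem sum_Icc_succ_neg_one_pow_mul_choose_mul_choose {R : Type*} [CommRing R] {n m : ℕ}
    (h : m < n) :
    ∑ k ∈ Icc (m + 1) n, (-1 : R) ^ (k + m) * (n.choose k : R) * (k.choose m : R) =
      -n.choose m := by
  have hfull := sum_Icc_neg_one_pow_mul_choose_mul_choose (R := R) n m
  rw [← insert_Icc_add_one_left_eq_Icc h.le, sum_insert (by simp), if_neg h.ne, ← two_mul, pow_mul,
    Nat.choose_self] at hfull
  simp only [neg_one_sq, one_pow, one_mul, Nat.cast_one, mul_one] at hfull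
  linear_combination hfull

theorem weighted_choose_div_two_mul_add_one_eq {K : Type*} [Field K] [CharZero K] (k m : ℕ) :
    (1 - (2 * (k : K) + 1) * ((m : K) + 2)) * ((2 * (m : K) + 2) / (2 * (k : K) + 1)) *
        (k.choose (m + 1) : K) +
      (1 - (2 * (k : K) + 1) * ((m : K) + 1)) * ((2 * (m : K) + 1) / (2 * (k : K) + 1)) *
        (k.choose m : K) =
      (1 - ((m : K) + 1) * (2 * m + 1)) * k.choose m -
        2 * ((m : K) + 1) * (m + 2) * k.choose (m + 1) := by
  have hid : ((m : K) + 1) * k.choose (m + 1) + m * k.choose m = k * k.choose m := by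
    exact_mod_cast Nat.succ_mul_choose_succ_add_mul_choose k m
  have hk : (2 * (k : K) + 1) ≠ 0 := by exact_mod_cast (2 * k).succ_ne_zero
  field_simp
  linear_combination 2 * hid

theorem stmt_1 (l m : ℕ) (hml : m ≤ l) :
    (∑ k ∈ Finset.Icc (m + 1) (l + 1),
      (-1 : ℚ) ^ (k + m) * ((l + 1).choose k : ℚ) *
        ((1 - (2 * (k : ℚ) + 1) * ((m : ℚ) + 2)) * ((2 * (m : ℚ) + 2) / (2 * (k : ℚ) + 1)) *
            (k.choose (m + 1) : ℚ) +
          (1 - (2 * (k : ℚ) + 1) * ((m : ℚ) + 1)) * ((2 * (m : ℚ) + 1) / (2 * (k : ℚ) + 1)) *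
            (k.choose m : ℚ))) +
      (1 - (2 * (m : ℚ) + 1) * ((m : ℚ) + 1)) * ((l + 1).choose m : ℚ) =
    if m < l then 0 else 2 * ((l : ℚ) + 1) * ((l : ℚ) + 2) := by
  have hsum_m := sum_Icc_succ_neg_one_pow_mul_choose_mul_choose (R := ℚ) (Nat.lt_succ_of_le hml)
  have hsum_succ := sum_Icc_neg_one_pow_mul_choose_mul_choose (R := ℚ) (l + 1) (m + 1)
  simp only [← add_assoc, pow_succ, mul_neg_one, neg_mul, sum_neg_distrib,
    Nat.add_right_cancel_iff] at hsum_succ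
  rw [sum_congr rfl (g := fun k ↦ (1 - ((m : ℚ) + 1) * (2 * m + 1)) *
      ((-1) ^ (k + m) * ((l + 1).choose k : ℚ) * k.choose m) - 2 * ((m : ℚ) + 1) * (m + 2) *
      ((-1) ^ (k + m) * ((l + 1).choose k : ℚ) * k.choose (m + 1)))
    fun k _ ↦ by rw [weighted_choose_div_two_mul_add_one_eq]; ring,
    sum_sub_distrib, ← mul_sum, ← mul_sum, hsum_m, neg_eq_iff_eq_neg.mp hsum_succ]
  rcases hml.lt_or_eq with hlt | rfl
  · simp only [if_pos hlt, if_neg hlt.ne]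
    ring
  · simp only [lt_irrefl, if_false, if_true]
    ring
end

section
/- Let l be a natural number, C₀ ∈ ℝ, and define r(θ) = C₂ + C₁ cosθ - 2C₀ ∑_{k=0}^{l} ((-1)^k / ((2k+1)(2k+2))) · C(l,k) · cos^{2k+2}θ. Then -(1/2) sinθ · d/dθ( (1/sinθ) · dr/dθ ) = C₀ sin^{2l+2}θ for all θ ∈ (0,π). -/
/-!
Writing `r θ = q (cos θ)` for a polynomial `q`, the chain rule gives `r' = -sin · q'(cos)`, so
`(1 / sin) · r' = -q'(cos)` and the operator becomes `-(1/2) sin² θ · q''(cos θ)`. Differentiating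
the given `q` twice cancels the factors `(2k+1)(2k+2)`, and the binomial theorem leaves
`q'' = -2 C₀ (1 - X²)^l`, which at `cos θ` is `-2 C₀ sin^{2l} θ`.
-/

open Real Set Finset Polynomial

theorem hasDerivAt_eval_cos (p : ℝ[X]) (x : ℝ) :
    HasDerivAt (fun y => p.eval (cos y)) (-sin x * p.derivative.eval (cos x)) x :=
  ((p.hasDerivAt (cos x)).comp x (hasDerivAt_cos x)).congr_deriv (mul_comm _ _)

theorem deriv_one_div_sin_mul_deriv_eval_cos (p : ℝ[X]) {θ : ℝ} (hθ : sin θ ≠ 0) :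
    deriv (fun x => 1 / sin x * deriv (fun y => p.eval (cos y)) x) θ =
      sin θ * p.derivative.derivative.eval (cos θ) := by
  have hsin : ∀ᶠ x in nhds θ, sin x ≠ 0 := continuous_sin.continuousAt.eventually_ne hθ
  have heq : (fun x => 1 / sin x * deriv (fun y => p.eval (cos y)) x) =ᶠ[nhds θ]
      fun x => -p.derivative.eval (cos x) := by
    filter_upwards [hsin] with x hx
    rw [(hasDerivAt_eval_cos p x).deriv]
    field_simp
  rw [heq.deriv_eq, (hasDerivAt_eval_cos p.derivative θ).fun_neg.deriv]
  ring

theorem one_sub_X_sq_pow {R : Type*} [CommRing R] (l : ℕ) :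
    ((1 : R[X]) - X ^ 2) ^ l =
      ∑ k ∈ range (l + 1), C ((-1 : R) ^ k * l.choose k) * X ^ (2 * k) := by
  rw [sub_eq_neg_add, add_pow]
  refine sum_congr rfl fun k _ => ?_
  rw [one_pow, mul_one, neg_pow, pow_mul, C_mul, C_pow, C_neg, C_1, map_natCast]
  ring

noncomputable def astigmatismPoly (l : ℕ) (C₀ C₁ C₂ : ℝ) : ℝ[X] :=
  C C₂ + C C₁ * X - C (2 * C₀) * ∑ k ∈ range (l + 1),
    C ((-1 : ℝ) ^ k / ((2 * k + 1) * (2 * k + 2)) * l.choose k) * X ^ (2 * k + 2)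

theorem eval_astigmatismPoly (l : ℕ) (C₀ C₁ C₂ x : ℝ) :
    (astigmatismPoly l C₀ C₁ C₂).eval x = C₂ + C₁ * x - 2 * C₀ * ∑ k ∈ range (l + 1),
      (-1 : ℝ) ^ k / ((2 * k + 1) * (2 * k + 2)) * l.choose k * x ^ (2 * k + 2) := by
  simp [astigmatismPoly, eval_finsetSum]

theorem derivative_derivative_astigmatismPoly (l : ℕ) (C₀ C₁ C₂ : ℝ) :
    (astigmatismPoly l C₀ C₁ C₂).derivative.derivative = C (-2 * C₀) * (1 - X ^ 2) ^ l := by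
  simp only [astigmatismPoly, derivative_add, derivative_sub, derivative_C, derivative_sum,
    derivative_X, derivative_one, derivative_X_pow_succ,
    derivative_mul, one_sub_X_sq_pow, mul_sum, mul_zero, zero_add, zero_mul, zero_sub]
  rw [← sum_neg_distrib]
  refine sum_congr rfl fun k _ => ?_
  simp only [← mul_assoc, ← C_mul, ← neg_mul, ← C_neg]
  congr 2
  push_cast
  field_simp
  ring

theorem stmt_5 (l : ℕ) (C₀ C₁ C₂ : ℝ) (r : ℝ → ℝ)
    (hr : ∀ θ, r θ = C₂ + C₁ * Real.cos θ -
      2 * C₀ * ∑ k ∈ Finset.range (l + 1),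
        ((-1 : ℝ) ^ k / ((2 * (k : ℝ) + 1) * (2 * (k : ℝ) + 2))) * (l.choose k : ℝ) *
          Real.cos θ ^ (2 * k + 2)) :
    ∀ θ ∈ Set.Ioo 0 Real.pi,
      -(1 / 2) * Real.sin θ * deriv (fun x => (1 / Real.sin x) * deriv r x) θ =
        C₀ * Real.sin θ ^ (2 * l + 2) := by
  intro θ hθ
  have hsin : sin θ ≠ 0 := (sin_pos_of_pos_of_lt_pi hθ.1 hθ.2).ne'
  have hr_eval : r = fun x => (astigmatismPoly l C₀ C₁ C₂).eval (cos x) :=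
    funext fun x => by rw [hr, eval_astigmatismPoly]
  rw [hr_eval, deriv_one_div_sin_mul_deriv_eval_cos _ hsin,
    derivative_derivative_astigmatismPoly]
  simp only [eval_mul, eval_C, eval_pow, eval_sub, eval_one, eval_X, ← sin_sq, ← pow_mul]
  ring
end

section
/- Let ψ, s : (0,π) → ℝ be smooth with s(θ) = C₀ sin^{2/(μ-1)}θ and ψ(θ) = ψ∞ - μ C₀ sin^{2/(μ-1)}θ for constants μ > 1, ψ∞, C₀ ∈ ℝ. Then the pair (ψ, s) satisfies both the linear Hopf relation ψ + μ s = ψ∞ and the Codazzi–Mainardi equation d/dθ(ψ + s) + 2 cotθ · s = 0. -/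
open Real Set

theorem hasDerivAt_sin_rpow (p : ℝ) {θ : ℝ} (h : sin θ ≠ 0) :
    HasDerivAt (fun x => sin x ^ p) (p * (cos θ / sin θ) * sin θ ^ p) θ := by
  convert (hasDerivAt_sin θ).rpow_const (p := p) (Or.inl h) using 1
  rw [rpow_sub_one h]
  field_simp

theorem stmt_7 (μ ψinf C₀ : ℝ) (hμ : 1 < μ) (s ψ : ℝ → ℝ)
    (hs : ∀ θ, s θ = C₀ * Real.sin θ ^ ((2 : ℝ) / (μ - 1)))
    (hψ : ∀ θ, ψ θ = ψinf - μ * C₀ * Real.sin θ ^ ((2 : ℝ) / (μ - 1))) :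
    ∀ θ ∈ Set.Ioo 0 Real.pi,
      ψ θ + μ * s θ = ψinf ∧
      deriv (fun x => ψ x + s x) θ + 2 * (Real.cos θ / Real.sin θ) * s θ = 0 := by
  intro θ hθ
  have hsin : sin θ ≠ 0 := (sin_pos_of_pos_of_lt_pi hθ.1 hθ.2).ne'
  have hμ1 : μ - 1 ≠ 0 := (sub_pos.2 hμ).ne'
  have hsum : (fun x => ψ x + s x)
      = fun x => ψinf + (1 - μ) * C₀ * sin x ^ ((2 : ℝ) / (μ - 1)) := by
    funext x
    rw [hψ, hs]
    ring
  refine ⟨by rw [hψ, hs]; ring, ?_⟩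
  -- The exponent is chosen so that `(1 - μ) * (2 / (μ - 1)) = -2`.
  rw [hsum, (((hasDerivAt_sin_rpow _ hsin).const_mul _).const_add ψinf).deriv, hs]
  field_simp
  ring
end

section
/- Suppose ψ, s : (0,π) → ℝ are C¹, s never vanishes, they satisfy ψ + μ s = ψ∞ for constants μ > 1, ψ∞, and the Codazzi–Mainardi equation d/dθ(ψ+s) + 2 cotθ · s = 0. Then there exists C₀ ≠ 0 such that s(θ) = C₀ sin^{2/(μ-1)}θ for all θ ∈ (0,π). -/
/-!
The linear relation `ψ + μ s = ψ∞` turns the Codazzi–Mainardi equation into the first-order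
linear ODE `s' = (2 / (μ - 1)) cot θ · s`. Since `cot = sin' / sin`, the product `s · sin^(-k)`
with `k = 2 / (μ - 1)` has zero derivative on the connected interval `(0, π)`, so it is constant;
its value at `π / 2` is `s (π / 2) ≠ 0`.
-/

open Real Set

theorem mul_rpow_neg_eq_of_hasDerivAt {S : Set ℝ} (hS : IsOpen S) (hS' : IsPreconnected S)
    {f g g' : ℝ → ℝ} {k : ℝ} (hg : ∀ x ∈ S, 0 < g x) (hg' : ∀ x ∈ S, HasDerivAt g (g' x) x)
    (hf : ∀ x ∈ S, HasDerivAt f (k * (g' x / g x) * f x) x) {x y : ℝ} (hx : x ∈ S)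
    (hy : y ∈ S) : f x * g x ^ (-k) = f y * g y ^ (-k) := by
  have hzero : ∀ z ∈ S, HasDerivAt (fun z => f z * g z ^ (-k)) 0 z := by
    intro z hz
    have hgz := hg z hz
    refine ((hf z hz).mul ((hg' z hz).rpow_const (p := -k) (Or.inl hgz.ne'))).congr_deriv ?_
    rw [rpow_sub hgz, rpow_one]
    field_simp
    ring
  exact hS.is_const_of_deriv_eq_zero hS'
    (fun z hz => (hzero z hz).differentiableAt.differentiableWithinAt)
    (fun z hz => (hzero z hz).deriv) hx hy

theorem deriv_add_eq_of_add_mul_eq_const {U : Set ℝ} (hU : IsOpen U) {ψ s : ℝ → ℝ}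
    {μ ψinf : ℝ} (hlin : ∀ θ ∈ U, ψ θ + μ * s θ = ψinf) {θ : ℝ} (hθ : θ ∈ U)
    (hs : DifferentiableAt ℝ s θ) :
    deriv (fun x => ψ x + s x) θ = (1 - μ) * deriv s θ := by
  have heq : (fun x => ψ x + s x) =ᶠ[nhds θ] fun x => ψinf + (1 - μ) * s x := by
    filter_upwards [hU.mem_nhds hθ] with x hx
    linarith [hlin x hx]
  rw [heq.deriv_eq, deriv_const_add, deriv_const_mul _ hs]

theorem stmt_8_general (μ ψinf : ℝ) (hμ : 1 < μ) (ψ s : ℝ → ℝ)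
    (hsC1 : ContDiffOn ℝ 1 s (Set.Ioo 0 Real.pi))
    (hs0 : ∀ θ ∈ Set.Ioo 0 Real.pi, s θ ≠ 0)
    (hlin : ∀ θ ∈ Set.Ioo 0 Real.pi, ψ θ + μ * s θ = ψinf)
    (hCM : ∀ θ ∈ Set.Ioo 0 Real.pi,
      deriv (fun x => ψ x + s x) θ + 2 * (Real.cos θ / Real.sin θ) * s θ = 0) :
    ∃ C₀ : ℝ, C₀ ≠ 0 ∧ ∀ θ ∈ Set.Ioo 0 Real.pi,
      s θ = C₀ * Real.sin θ ^ ((2 : ℝ) / (μ - 1)) := by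
  have hsin : ∀ θ ∈ Ioo 0 π, 0 < sin θ := fun θ hθ => sin_pos_of_pos_of_lt_pi hθ.1 hθ.2
  have hode : ∀ θ ∈ Ioo 0 π, HasDerivAt s (2 / (μ - 1) * (cos θ / sin θ) * s θ) θ := by
    intro θ hθ
    have hs := (hsC1.differentiableOn one_ne_zero).differentiableAt (isOpen_Ioo.mem_nhds hθ)
    have hcm := hCM θ hθ
    rw [deriv_add_eq_of_add_mul_eq_const isOpen_Ioo hlin hθ hs] at hcm
    refine hs.hasDerivAt.congr_deriv ?_
    rw [div_mul_eq_mul_div, div_mul_eq_mul_div, eq_div_iff (by linarith)]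
    linarith
  have hmid : π / 2 ∈ Ioo 0 π := ⟨by positivity, by linarith [pi_pos]⟩
  refine ⟨s (π / 2), hs0 _ hmid, fun θ hθ => ?_⟩
  have h := mul_rpow_neg_eq_of_hasDerivAt isOpen_Ioo isPreconnected_Ioo hsin
    (fun θ _ => hasDerivAt_sin θ) hode hθ hmid
  rwa [sin_pi_div_two, one_rpow, mul_one, rpow_neg (hsin θ hθ).le,
    mul_inv_eq_iff_eq_mul₀ (rpow_pos_of_pos (hsin θ hθ) _).ne'] at h

theorem stmt_8 (μ ψinf : ℝ) (hμ : 1 < μ) (ψ s : ℝ → ℝ)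
    (hψC1 : ContDiffOn ℝ 1 ψ (Set.Ioo 0 Real.pi))
    (hsC1 : ContDiffOn ℝ 1 s (Set.Ioo 0 Real.pi))
    (hs0 : ∀ θ ∈ Set.Ioo 0 Real.pi, s θ ≠ 0)
    (hlin : ∀ θ ∈ Set.Ioo 0 Real.pi, ψ θ + μ * s θ = ψinf)
    (hCM : ∀ θ ∈ Set.Ioo 0 Real.pi,
      deriv (fun x => ψ x + s x) θ + 2 * (Real.cos θ / Real.sin θ) * s θ = 0) :
    ∃ C₀ : ℝ, C₀ ≠ 0 ∧ ∀ θ ∈ Set.Ioo 0 Real.pi,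
      s θ = C₀ * Real.sin θ ^ ((2 : ℝ) / (μ - 1)) :=
  stmt_8_general μ ψinf hμ ψ s hsC1 hs0 hlin hCM
end

section
/- Let l ∈ ℕ, and suppose s : (0,π) → ℝ satisfies s(θ) = (a + b cosθ) sin^{2l+2}θ + O(sin^{2l+4}θ) near θ = 0, where ψ is determined via the Codazzi–Mainardi relation with dψ/dθ = -2(l+2)(b + a cosθ) sin^{2l+1}θ + O(sin^{2l+3}θ) and ds/dθ = 2(l+1)(b + a cosθ) sin^{2l+1}θ + O(sin^{2l+3}θ). If a ≠ ±b (non-degeneracy), then the slope at the umbilic point, μ_N = lim_{θ→0} (ψ(0) - ψ(θ))/s(θ), equals 1 + 1/(l+1). -/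
/-!
Both derivatives are, to leading order, multiples of the same function `(b + a cos θ) sin^{2l+1} θ`,
whose quotient by `sin^{2l+1} θ` tends to `b + a ≠ 0`. Hence `dψ/dθ` and `ds/dθ` have
ratio tending to `-(l+2)/(l+1)`, and L'Hôpital's rule, applicable since `ψ(0) - ψ` and `s` both
vanish at the pole, turns this into the slope `(l+2)/(l+1) = 1 + 1/(l+1)`.
-/

open Real Set Filter Asymptotics Topology

section Normalization

variable {α 𝕜 : Type*} [NormedField 𝕜] {l : Filter α} {f g u : α → 𝕜} {A B : 𝕜}

theorem tendsto_div_of_isLittleO_sub_mul (hf : (fun x => f x - g x * u x) =o[l] u)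
    (hu : ∀ᶠ x in l, u x ≠ 0) (hg : Tendsto g l (𝓝 A)) :
    Tendsto (fun x => f x / u x) l (𝓝 A) := by
  refine (zero_add A ▸ hf.tendsto_div_nhds_zero.add hg).congr' ?_
  filter_upwards [hu] with x hx
  field_simp
  ring

theorem tendsto_div_of_tendsto_div_of_tendsto_div (hf : Tendsto (fun x => f x / u x) l (𝓝 A))
    (hg : Tendsto (fun x => g x / u x) l (𝓝 B)) (hB : B ≠ 0) (hu : ∀ᶠ x in l, u x ≠ 0) :
    Tendsto (fun x => f x / g x) l (𝓝 (A / B)) := by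
  refine (hf.div hg hB).congr' ?_
  filter_upwards [hu] with x hx
  exact div_div_div_cancel_right₀ hx _ _

end Normalization

theorem eventually_sin_pos_nhdsGT_zero : ∀ᶠ θ in 𝓝[>] (0 : ℝ), 0 < sin θ := by
  filter_upwards [Ioo_mem_nhdsGT pi_pos] with θ hθ
  exact sin_pos_of_pos_of_lt_pi hθ.1 hθ.2

theorem tendsto_sin_nhdsGT_zero : Tendsto sin (𝓝[>] 0) (𝓝 0) :=
  (continuous_sin.tendsto' 0 0 sin_zero).mono_left nhdsWithin_le_nhds

theorem tendsto_const_add_mul_cos_nhdsGT_zero (a b : ℝ) :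
    Tendsto (fun θ => b + a * cos θ) (𝓝[>] 0) (𝓝 (b + a)) := by
  have hcos : Tendsto cos (𝓝[>] 0) (𝓝 1) :=
    (continuous_cos.tendsto' 0 1 cos_zero).mono_left nhdsWithin_le_nhds
  simpa using (hcos.const_mul a).const_add b

section SinPowExpansion

variable {f g : ℝ → ℝ} {c : ℝ} {n m : ℕ}

theorem tendsto_div_sin_pow_of_isBigO (hnm : n < m) (hg : Tendsto g (𝓝[>] 0) (𝓝 c))
    (hf : (fun θ => f θ - g θ * sin θ ^ n) =O[𝓝[>] 0] fun θ => sin θ ^ m) :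
    Tendsto (fun θ => f θ / sin θ ^ n) (𝓝[>] 0) (𝓝 c) := by
  have hsmall : (fun θ => sin θ ^ m) =o[𝓝[>] 0] fun θ => sin θ ^ n :=
    (isLittleO_pow_pow hnm).comp_tendsto tendsto_sin_nhdsGT_zero
  refine tendsto_div_of_isLittleO_sub_mul (hf.trans_isLittleO hsmall) ?_ hg
  filter_upwards [eventually_sin_pos_nhdsGT_zero] with θ hθ
  exact pow_ne_zero n hθ.ne'

theorem tendsto_zero_of_isBigO_sin_pow (hn : n ≠ 0) (hnm : n < m)
    (hg : Tendsto g (𝓝[>] 0) (𝓝 c))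
    (hf : (fun θ => f θ - g θ * sin θ ^ n) =O[𝓝[>] 0] fun θ => sin θ ^ m) :
    Tendsto f (𝓝[>] 0) (𝓝 0) := by
  have hpow : Tendsto (fun θ => sin θ ^ n) (𝓝[>] 0) (𝓝 0) := by
    simpa [zero_pow hn] using tendsto_sin_nhdsGT_zero.pow n
  refine (mul_zero c ▸ (tendsto_div_sin_pow_of_isBigO hnm hg hf).mul hpow).congr' ?_
  filter_upwards [eventually_sin_pos_nhdsGT_zero] with θ hθ
  exact div_mul_cancel₀ _ (pow_ne_zero n hθ.ne')

end SinPowExpansion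

theorem stmt_11_general (l : ℕ) (a b : ℝ) (hab' : a ≠ -b) (s ψ : ℝ → ℝ)
    (hψC : ContDiff ℝ 1 ψ)
    (hs : (fun θ => s θ - (a + b * Real.cos θ) * Real.sin θ ^ (2 * l + 2)) =O[nhdsWithin 0 (Set.Ioi 0)]
      fun θ => Real.sin θ ^ (2 * l + 4))
    (hψ' : (fun θ => deriv ψ θ -
        (-(2 * ((l : ℝ) + 2)) * (b + a * Real.cos θ) * Real.sin θ ^ (2 * l + 1))) =O[nhdsWithin 0 (Set.Ioi 0)]
      fun θ => Real.sin θ ^ (2 * l + 3))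
    (hs' : (fun θ => deriv s θ -
        (2 * ((l : ℝ) + 1) * (b + a * Real.cos θ) * Real.sin θ ^ (2 * l + 1))) =O[nhdsWithin 0 (Set.Ioi 0)]
      fun θ => Real.sin θ ^ (2 * l + 3)) :
    Filter.Tendsto (fun θ => (ψ 0 - ψ θ) / s θ) (nhdsWithin 0 (Set.Ioi 0))
      (nhds (1 + 1 / ((l : ℝ) + 1))) := by
  have hba : b + a ≠ 0 := fun h => hab' (by linarith)
  have hs'B : 2 * ((l : ℝ) + 1) * (b + a) ≠ 0 := mul_ne_zero (by positivity) hba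
  have hψ'lim := tendsto_div_sin_pow_of_isBigO (by omega)
    ((tendsto_const_add_mul_cos_nhdsGT_zero a b).const_mul _) hψ'
  have hs'lim := tendsto_div_sin_pow_of_isBigO (by omega)
    ((tendsto_const_add_mul_cos_nhdsGT_zero a b).const_mul _) hs'
  have hs0 : Tendsto s (𝓝[>] 0) (𝓝 0) := tendsto_zero_of_isBigO_sin_pow (by omega) (by omega)
    (tendsto_const_add_mul_cos_nhdsGT_zero b a) hs
  have hψ0 : Tendsto (fun θ => ψ 0 - ψ θ) (𝓝[>] 0) (𝓝 0) := by
    simpa using ((hψC.continuous.tendsto 0).mono_left nhdsWithin_le_nhds).const_sub (ψ 0)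
  have hs'ne : ∀ᶠ θ in 𝓝[>] 0, deriv s θ ≠ 0 := by
    filter_upwards [hs'lim.eventually_ne hs'B] with θ hθ h
    simp [h] at hθ
  have hratio := tendsto_div_of_tendsto_div_of_tendsto_div (f := fun θ => -deriv ψ θ)
    (by simpa only [neg_div] using hψ'lim.neg) hs'lim hs'B
    (eventually_sin_pos_nhdsGT_zero.mono fun θ hθ => pow_ne_zero _ hθ.ne')
  refine deriv.lhopital_zero_nhdsGT
    (.of_forall fun θ => (hψC.differentiable one_ne_zero θ).const_sub (ψ 0)) hs'ne hψ0 hs0 ?_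
  convert hratio using 2 with θ
  · rw [deriv_const_sub]
  · field_simp
    ring

theorem stmt_11 (l : ℕ) (a b : ℝ) (hab : a ≠ b) (hab' : a ≠ -b) (s ψ : ℝ → ℝ)
    (hsC : ContDiff ℝ 1 s) (hψC : ContDiff ℝ 1 ψ)
    (hs : (fun θ => s θ - (a + b * Real.cos θ) * Real.sin θ ^ (2 * l + 2)) =O[nhdsWithin 0 (Set.Ioi 0)]
      fun θ => Real.sin θ ^ (2 * l + 4))
    (hψ' : (fun θ => deriv ψ θ -
        (-(2 * ((l : ℝ) + 2)) * (b + a * Real.cos θ) * Real.sin θ ^ (2 * l + 1))) =O[nhdsWithin 0 (Set.Ioi 0)]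
      fun θ => Real.sin θ ^ (2 * l + 3))
    (hs' : (fun θ => deriv s θ -
        (2 * ((l : ℝ) + 1) * (b + a * Real.cos θ) * Real.sin θ ^ (2 * l + 1))) =O[nhdsWithin 0 (Set.Ioi 0)]
      fun θ => Real.sin θ ^ (2 * l + 3)) :
    Filter.Tendsto (fun θ => (ψ 0 - ψ θ) / s θ) (nhdsWithin 0 (Set.Ioi 0))
      (nhds (1 + 1 / ((l : ℝ) + 1))) :=
  stmt_11_general l a b hab' s ψ hψC hs hψ' hs'
end

section
/- Define s(t,θ) = [a₀ + (2/3)a₁(1-e^{-3t}) + (b₀ e^{-t} + (2/5) b₁ (e^{-t} - e^{-6t})) cosθ] sin²θ + (a₁ e^{-3t} + b₁ e^{-6t} cosθ) sin⁴θ. Then s satisfies, for all t > 0 and θ ∈ (0,π), the PDE ∂s/∂t = (1/(2sinθ)) ∂/∂θ(sinθ ∂s/∂θ) - 2 cotθ ∂s/∂θ + ((1+cos²θ)/sin²θ) s, with initial condition s(0,θ) = (a₀+b₀cosθ) sin²θ + (a₁+b₁cosθ) sin⁴θ. -/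
/-!
The four-dimensional space of profiles `(A + B cos θ) sin² θ + (C + D cos θ) sin⁴ θ` is invariant
under the spatial operator of the flow, which acts on the coefficients as the linear map
`(A, B, C, D) ↦ (2C, 2D - B, -3C, -6D)` (the identity `sin² θ + cos² θ = 1` absorbs the singular
factors `1 / sin θ` and `1 / sin² θ`). The PDE therefore reduces to this linear ODE system, and the
exponentials in `s` are its explicit solution.
-/

open Real

noncomputable def profile (A B C D θ : ℝ) : ℝ :=
  (A + B * cos θ) * sin θ ^ 2 + (C + D * cos θ) * sin θ ^ 4

noncomputable def hopfOperator (f : ℝ → ℝ) (θ : ℝ) : ℝ :=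
  1 / (2 * sin θ) * deriv (fun x => sin x * deriv f x) θ - 2 * (cos θ / sin θ) * deriv f θ +
    (1 + cos θ ^ 2) / sin θ ^ 2 * f θ

lemma hasDerivAt_profile (A B C D x : ℝ) :
    HasDerivAt (profile A B C D)
      (sin x * (2 * A * cos x + B * (2 * cos x ^ 2 - sin x ^ 2) + 4 * C * sin x ^ 2 * cos x +
        D * (4 * sin x ^ 2 * cos x ^ 2 - sin x ^ 4))) x := by
  have hs := hasDerivAt_sin x
  have hc := hasDerivAt_cos x
  refine ((((hc.const_mul B).const_add A).mul (hs.pow 2)).add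
    (((hc.const_mul D).const_add C).mul (hs.pow 4))).congr_deriv ?_
  simp only [Pi.pow_apply]
  ring

lemma hasDerivAt_sin_mul_deriv_profile (A B C D x : ℝ) :
    HasDerivAt (fun y => sin y * deriv (profile A B C D) y)
      (sin x * (2 * A * (2 * cos x ^ 2 - sin x ^ 2) + B * (4 * cos x ^ 3 - 8 * sin x ^ 2 * cos x) +
        4 * C * (4 * sin x ^ 2 * cos x ^ 2 - sin x ^ 4) +
        D * (16 * sin x ^ 2 * cos x ^ 3 - 14 * sin x ^ 4 * cos x))) x := by
  have hs := hasDerivAt_sin x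
  have hc := hasDerivAt_cos x
  have hq := (((hc.const_mul (2 * A)).add
    ((((hc.pow 2).const_mul 2).sub (hs.pow 2)).const_mul B)).add
    (((hs.pow 2).mul hc).const_mul (4 * C))).add
    (((((hs.pow 2).mul (hc.pow 2)).const_mul 4).sub (hs.pow 4)).const_mul D)
  have hfun : (fun y => sin y * deriv (profile A B C D) y) = fun y => sin y ^ 2 *
      (2 * A * cos y + B * (2 * cos y ^ 2 - sin y ^ 2) + 4 * C * (sin y ^ 2 * cos y) +
        D * (4 * (sin y ^ 2 * cos y ^ 2) - sin y ^ 4)) := by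
    funext y
    rw [(hasDerivAt_profile A B C D y).deriv]
    ring
  rw [hfun]
  refine ((hs.pow 2).mul hq).congr_deriv ?_
  simp only [Pi.add_apply, Pi.sub_apply, Pi.mul_apply, Pi.pow_apply]
  ring

lemma hopfOperator_profile (A B C D : ℝ) {θ : ℝ} (hθ : sin θ ≠ 0) :
    hopfOperator (profile A B C D) θ = profile (2 * C) (2 * D - B) (-3 * C) (-6 * D) θ := by
  rw [hopfOperator, (hasDerivAt_sin_mul_deriv_profile A B C D θ).deriv,
    (hasDerivAt_profile A B C D θ).deriv]
  simp only [profile]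
  field_simp
  linear_combination
    -2 * (A + B * cos θ - C * sin θ ^ 2 - D * cos θ * sin θ ^ 2) * sin_sq_add_cos_sq θ

lemma hasDerivAt_profile_coeffs {A B C D : ℝ → ℝ} {A' B' C' D' t : ℝ} (hA : HasDerivAt A A' t)
    (hB : HasDerivAt B B' t) (hC : HasDerivAt C C' t) (hD : HasDerivAt D D' t) (θ : ℝ) :
    HasDerivAt (fun τ => profile (A τ) (B τ) (C τ) (D τ) θ) (profile A' B' C' D' θ) t :=
  ((hA.add (hB.mul_const _)).mul_const _).add ((hC.add (hD.mul_const _)).mul_const _)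

lemma hasDerivAt_exp_const_mul (k t : ℝ) :
    HasDerivAt (fun τ => exp (k * τ)) (k * exp (k * t)) t := by
  simpa [mul_comm] using ((hasDerivAt_id t).const_mul k).exp

noncomputable def astigmatism (a₀ b₀ a₁ b₁ t : ℝ) : ℝ → ℝ :=
  profile (a₀ + (2 / 3) * a₁ * (1 - exp (-3 * t)))
    (b₀ * exp (-t) + (2 / 5) * b₁ * (exp (-t) - exp (-6 * t)))
    (a₁ * exp (-3 * t)) (b₁ * exp (-6 * t))

lemma hasDerivAt_astigmatism (a₀ b₀ a₁ b₁ t : ℝ) {θ : ℝ} (hθ : sin θ ≠ 0) :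
    HasDerivAt (fun τ => astigmatism a₀ b₀ a₁ b₁ τ θ)
      (hopfOperator (astigmatism a₀ b₀ a₁ b₁ t) θ) t := by
  have e1 : HasDerivAt (fun τ => exp (-τ)) (-exp (-t)) t := by
    simpa using (hasDerivAt_neg t).exp
  have e3 := hasDerivAt_exp_const_mul (-3) t
  have e6 := hasDerivAt_exp_const_mul (-6) t
  have hA := (((hasDerivAt_const t 1).sub e3).const_mul (2 / 3 * a₁)).const_add a₀
  have hB := (e1.const_mul b₀).add ((e1.sub e6).const_mul (2 / 5 * b₁))
  rw [astigmatism, hopfOperator_profile _ _ _ _ hθ]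
  refine (hasDerivAt_profile_coeffs hA hB (e3.const_mul a₁) (e6.const_mul b₁) θ).congr_deriv ?_
  congr 1 <;> ring

theorem stmt_12 (a₀ b₀ a₁ b₁ : ℝ) (s : ℝ → ℝ → ℝ)
    (hs : ∀ t θ, s t θ =
      (a₀ + (2 / 3) * a₁ * (1 - Real.exp (-3 * t)) +
          (b₀ * Real.exp (-t) + (2 / 5) * b₁ * (Real.exp (-t) - Real.exp (-6 * t))) *
            Real.cos θ) * Real.sin θ ^ 2 +
        (a₁ * Real.exp (-3 * t) + b₁ * Real.exp (-6 * t) * Real.cos θ) * Real.sin θ ^ 4) :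
    (∀ t > (0 : ℝ), ∀ θ ∈ Set.Ioo 0 Real.pi,
      deriv (fun τ => s τ θ) t =
        (1 / (2 * Real.sin θ)) *
            deriv (fun x => Real.sin x * deriv (fun y => s t y) x) θ -
          2 * (Real.cos θ / Real.sin θ) * deriv (fun y => s t y) θ +
          ((1 + Real.cos θ ^ 2) / Real.sin θ ^ 2) * s t θ) ∧
    (∀ θ, s 0 θ = (a₀ + b₀ * Real.cos θ) * Real.sin θ ^ 2 +
      (a₁ + b₁ * Real.cos θ) * Real.sin θ ^ 4) := by
  obtain rfl : s = astigmatism a₀ b₀ a₁ b₁ := funext₂ hs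
  refine ⟨fun t _ θ hθ => ?_, fun θ => ?_⟩
  · exact (hasDerivAt_astigmatism a₀ b₀ a₁ b₁ t (sin_pos_of_pos_of_lt_pi hθ.1 hθ.2).ne').deriv
  · simp [astigmatism, profile]
end

section
/- Fix λ ≠ 3, λ > 1. Suppose C₀(t) = ψ∞ + C₃ e^{-t} + 2C₂ ((λ-2)/(λ-3)) e^{(2-λ)t} and C₁(t) = C₂ e^{(2-λ)t}. Then ψ(t,θ) = C₀(t) - 2 C₁(t) sin²θ and s(t,θ) = C₁(t) sin²θ solve the system ∂ψ/∂t = ((λ-1)/(2sinθ)) ∂/∂θ(sinθ ∂ψ/∂θ) - λ cotθ ∂ψ/∂θ - 2λ s/sin²θ - ψ + ψ∞ and ∂s/∂t = ((λ-1)/(2sinθ)) ∂/∂θ(sinθ ∂s/∂θ) - λ cotθ ∂s/∂θ + ((1+cos²θ)/sin²θ) s. -/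
open Real Set

/-!
With the ansatz `ψ = C₀ - 2 C₁ sin² θ`, `s = C₁ sin² θ` both equations close on the span of
`1` and `sin² θ`, because `angularOp λ` maps `sin² θ` to `(3 - λ) sin² θ - 2`.
Comparing coefficients reduces the system to the linear ODEs `C₁' = (2 - λ) C₁` and
`C₀' = ψ∞ - C₀ + 2 (2 - λ) C₁`, which the given exponentials solve.
-/

noncomputable def angularOp (lam : ℝ) (f : ℝ → ℝ) (θ : ℝ) : ℝ :=
  ((lam - 1) / (2 * sin θ)) * deriv (fun x => sin x * deriv f x) θ -
    lam * (cos θ / sin θ) * deriv f θ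

lemma hasDerivAt_const_add_mul_sin_sq (a b x : ℝ) :
    HasDerivAt (fun y => a + b * sin y ^ 2) (2 * b * (sin x * cos x)) x :=
  (((hasDerivAt_sin x).pow 2).const_mul b |>.const_add a).congr_deriv (by push_cast; ring)

lemma angularOp_const_add_mul_sin_sq (lam a b : ℝ) {θ : ℝ} (hθ : sin θ ≠ 0) :
    angularOp lam (fun y => a + b * sin y ^ 2) θ = b * ((3 - lam) * sin θ ^ 2 - 2) := by
  have hf : deriv (fun y => a + b * sin y ^ 2) = fun x => 2 * b * (sin x * cos x) :=
    funext fun x => (hasDerivAt_const_add_mul_sin_sq a b x).deriv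
  have hflux : HasDerivAt (fun x => sin x * (2 * b * (sin x * cos x)))
      (2 * b * (2 * sin θ * cos θ ^ 2 - sin θ ^ 3)) θ :=
    ((hasDerivAt_sin θ).mul (((hasDerivAt_sin θ).mul (hasDerivAt_cos θ)).const_mul (2 * b)))
      |>.congr_deriv (by simp only [Pi.mul_apply]; ring)
  rw [angularOp, hf, hflux.deriv]
  field_simp
  linear_combination (2 * b * (lam - 1) - 2 * b * lam) * sin_sq_add_cos_sq θ

lemma hasDerivAt_const_mul_exp_mul (c k t : ℝ) :
    HasDerivAt (fun τ => c * exp (k * τ)) (k * (c * exp (k * t))) t :=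
  (((hasDerivAt_id t).const_mul k).exp.const_mul c).congr_deriv (by simp only [id, mul_one]; ring)

section ansatz

variable {lam ψinf : ℝ} {C₀ C₁ : ℝ → ℝ} {θ : ℝ}

lemma ansatz_psi_eq (hθ : sin θ ≠ 0) (t : ℝ)
    (hC₀ : HasDerivAt C₀ (ψinf - C₀ t + 2 * (2 - lam) * C₁ t) t)
    (hC₁ : HasDerivAt C₁ ((2 - lam) * C₁ t) t) :
    deriv (fun τ => C₀ τ - 2 * C₁ τ * sin θ ^ 2) t =
      angularOp lam (fun y => C₀ t - 2 * C₁ t * sin y ^ 2) θ -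
        2 * lam * (C₁ t * sin θ ^ 2) / sin θ ^ 2 - (C₀ t - 2 * C₁ t * sin θ ^ 2) + ψinf := by
  have hL := angularOp_const_add_mul_sin_sq lam (C₀ t) (-2 * C₁ t) hθ
  simp only [neg_mul, ← sub_eq_add_neg] at hL
  have ht : HasDerivAt (fun τ => C₀ τ - 2 * C₁ τ * sin θ ^ 2)
      (ψinf - C₀ t + 2 * (2 - lam) * C₁ t - 2 * ((2 - lam) * C₁ t) * sin θ ^ 2) t :=
    hC₀.sub ((hC₁.const_mul 2).mul_const (sin θ ^ 2))
  rw [ht.deriv, hL]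
  field_simp
  ring

lemma ansatz_s_eq (hθ : sin θ ≠ 0) (t : ℝ) (hC₁ : HasDerivAt C₁ ((2 - lam) * C₁ t) t) :
    deriv (fun τ => C₁ τ * sin θ ^ 2) t =
      angularOp lam (fun y => C₁ t * sin y ^ 2) θ +
        ((1 + cos θ ^ 2) / sin θ ^ 2) * (C₁ t * sin θ ^ 2) := by
  have hL := angularOp_const_add_mul_sin_sq lam 0 (C₁ t) hθ
  simp only [zero_add] at hL
  rw [(hC₁.mul_const (sin θ ^ 2)).deriv, hL]
  field_simp
  linear_combination (-C₁ t) * sin_sq_add_cos_sq θ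

end ansatz

theorem stmt_14_general (lam ψinf C₂ C₃ : ℝ) (hlam3 : lam ≠ 3)
    (C₀ C₁ : ℝ → ℝ)
    (hC₀ : ∀ t, C₀ t = ψinf + C₃ * Real.exp (-t) +
      2 * C₂ * ((lam - 2) / (lam - 3)) * Real.exp ((2 - lam) * t))
    (hC₁ : ∀ t, C₁ t = C₂ * Real.exp ((2 - lam) * t))
    (ψ s : ℝ → ℝ → ℝ)
    (hψ : ∀ t θ, ψ t θ = C₀ t - 2 * C₁ t * Real.sin θ ^ 2)
    (hs : ∀ t θ, s t θ = C₁ t * Real.sin θ ^ 2) :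
    ∀ (t : ℝ), ∀ θ ∈ Set.Ioo 0 Real.pi,
      (deriv (fun τ => ψ τ θ) t =
        ((lam - 1) / (2 * Real.sin θ)) *
            deriv (fun x => Real.sin x * deriv (fun y => ψ t y) x) θ -
          lam * (Real.cos θ / Real.sin θ) * deriv (fun y => ψ t y) θ -
          2 * lam * s t θ / Real.sin θ ^ 2 - ψ t θ + ψinf) ∧
      (deriv (fun τ => s τ θ) t =
        ((lam - 1) / (2 * Real.sin θ)) *
            deriv (fun x => Real.sin x * deriv (fun y => s t y) x) θ -
          lam * (Real.cos θ / Real.sin θ) * deriv (fun y => s t y) θ +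
          ((1 + Real.cos θ ^ 2) / Real.sin θ ^ 2) * s t θ) := by
  intro t θ hθ
  obtain rfl : ψ = fun t θ => C₀ t - 2 * C₁ t * sin θ ^ 2 := funext₂ hψ
  obtain rfl : s = fun t θ => C₁ t * sin θ ^ 2 := funext₂ hs
  obtain rfl : C₀ = _ := funext hC₀
  obtain rfl : C₁ = _ := funext hC₁
  have hsin : sin θ ≠ 0 := (sin_pos_of_pos_of_lt_pi hθ.1 hθ.2).ne'
  have hC₁' (t : ℝ) := hasDerivAt_const_mul_exp_mul C₂ (2 - lam) t
  have hC₀' : HasDerivAt (fun τ => ψinf + C₃ * exp (-τ) +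
      2 * C₂ * ((lam - 2) / (lam - 3)) * exp ((2 - lam) * τ))
      (ψinf - (ψinf + C₃ * exp (-t) + 2 * C₂ * ((lam - 2) / (lam - 3)) * exp ((2 - lam) * t)) +
        2 * (2 - lam) * (C₂ * exp ((2 - lam) * t))) t := by
    refine ((((hasDerivAt_neg t).exp.const_mul C₃).const_add ψinf).add
      (hasDerivAt_const_mul_exp_mul _ (2 - lam) t)).congr_deriv ?_
    field_simp [sub_ne_zero.mpr hlam3]
    ring
  exact ⟨ansatz_psi_eq hsin t hC₀' (hC₁' t), ansatz_s_eq hsin t (hC₁' t)⟩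

theorem stmt_14 (lam ψinf C₂ C₃ : ℝ) (hlam3 : lam ≠ 3) (hlam1 : 1 < lam)
    (C₀ C₁ : ℝ → ℝ)
    (hC₀ : ∀ t, C₀ t = ψinf + C₃ * Real.exp (-t) +
      2 * C₂ * ((lam - 2) / (lam - 3)) * Real.exp ((2 - lam) * t))
    (hC₁ : ∀ t, C₁ t = C₂ * Real.exp ((2 - lam) * t))
    (ψ s : ℝ → ℝ → ℝ)
    (hψ : ∀ t θ, ψ t θ = C₀ t - 2 * C₁ t * Real.sin θ ^ 2)
    (hs : ∀ t θ, s t θ = C₁ t * Real.sin θ ^ 2) :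
    ∀ (t : ℝ), ∀ θ ∈ Set.Ioo 0 Real.pi,
      (deriv (fun τ => ψ τ θ) t =
        ((lam - 1) / (2 * Real.sin θ)) *
            deriv (fun x => Real.sin x * deriv (fun y => ψ t y) x) θ -
          lam * (Real.cos θ / Real.sin θ) * deriv (fun y => ψ t y) θ -
          2 * lam * s t θ / Real.sin θ ^ 2 - ψ t θ + ψinf) ∧
      (deriv (fun τ => s τ θ) t =
        ((lam - 1) / (2 * Real.sin θ)) *
            deriv (fun x => Real.sin x * deriv (fun y => s t y) x) θ -
          lam * (Real.cos θ / Real.sin θ) * deriv (fun y => s t y) θ +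
          ((1 + Real.cos θ ^ 2) / Real.sin θ ^ 2) * s t θ) :=
  stmt_14_general lam ψinf C₂ C₃ hlam3 C₀ C₁ hC₀ hC₁ ψ s hψ hs
end
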